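/- arXiv:1609.09134 — 3 statements merged into one kernel-verified Lean document; each statement's English description precedes it below -/
import Mathlib

section
/- Let G be a finite simple graph with maximum degree at most Δ, let K be a clique of size Δ in G, and suppose there exist two adjacent vertices u', v' outside K each having a neighbor in K. Then α(G) ≥ α(G − V(K)) + 1. -/
open SimpleGraph

/-- A finset is independent in `G` if no two distinct members are adjacent. -/
def IsIndepFinset {V : Type*} (G : SimpleGraph V) (s : Finset V) : Prop :=
  ∀ v ∈ s, ∀ w ∈ s, v ≠ w → ¬ G.Adj v w

/-- The independence number: the largest cardinality of an independent finset. -/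
noncomputable def indepNum {V : Type*} (G : SimpleGraph V) : ℕ :=
  sSup {n | ∃ s : Finset V, IsIndepFinset G s ∧ s.card = n}

/-- The closed neighborhood of a vertex, as a finset. -/
def closedNbhd {V : Type*} [Fintype V] [DecidableEq V] (G : SimpleGraph V)
    [DecidableRel G.Adj] (v : V) : Finset V :=
  insert v (G.neighborFinset v)

/-!
Take a maximum independent set `S` of `G - K`. Every vertex of `K` has `Δ - 1` neighbours
inside `K`, hence at most one outside. If some vertex of `K` has no neighbour in `S`, it extends
`S`. Otherwise every vertex of `K` has its unique outside neighbour in `S`; in particular the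
neighbours `u'` and `v'` of `K` both lie in `S`, contradicting `u' ~ v'`.
-/

namespace IsIndepFinset

variable {V W : Type*} {G : SimpleGraph V} {s : Finset V}

lemma map_embedding {H : SimpleGraph W} (f : G ↪g H) (hs : IsIndepFinset G s) :
    IsIndepFinset H (s.map f.toEmbedding) := by
  simp only [IsIndepFinset, Finset.mem_map, RelEmbedding.coe_toEmbedding]
  rintro _ ⟨v, hv, rfl⟩ _ ⟨w, hw, rfl⟩ hne hadj
  exact hs v hv w hw (fun h => hne (congrArg f h)) (f.map_adj_iff.mp hadj)

lemma insert [DecidableEq V] {k : V} (hs : IsIndepFinset G s) (hk : ∀ t ∈ s, ¬ G.Adj k t) :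
    IsIndepFinset G (insert k s) := by
  intro a ha b hb hne hadj
  rcases Finset.mem_insert.mp ha with rfl | has <;> rcases Finset.mem_insert.mp hb with rfl | hbs
  · exact hne rfl
  · exact hk b hbs hadj
  · exact hk a has hadj.symm
  · exact hs a has b hbs hne hadj

end IsIndepFinset

section indepNum

variable {V : Type*} [Fintype V] (G : SimpleGraph V)

lemma bddAbove_indepFinset_cards :
    BddAbove {n | ∃ s : Finset V, IsIndepFinset G s ∧ s.card = n} :=
  ⟨Fintype.card V, fun _ ⟨s, _, hc⟩ => hc ▸ s.card_le_univ⟩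

lemma exists_isIndepFinset_card_eq_indepNum :
    ∃ s : Finset V, IsIndepFinset G s ∧ s.card = _root_.indepNum G :=
  Nat.sSup_mem (s := {n | ∃ s : Finset V, IsIndepFinset G s ∧ s.card = n})
    ⟨0, ∅, fun _ h => absurd h (Finset.notMem_empty _), rfl⟩ (bddAbove_indepFinset_cards G)

variable {G}

lemma IsIndepFinset.card_le_indepNum {s : Finset V} (hs : IsIndepFinset G s) :
    s.card ≤ _root_.indepNum G :=
  le_csSup (bddAbove_indepFinset_cards G) ⟨s, hs, rfl⟩

end indepNum

namespace SimpleGraph.IsNClique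

variable {V : Type*} [Fintype V] [DecidableEq V] {G : SimpleGraph V} [DecidableRel G.Adj]
  {n : ℕ} {K : Finset V} {k : V}

lemma card_neighborFinset_sdiff_add_le_degree (hK : G.IsNClique n K) (hk : k ∈ K) :
    (G.neighborFinset k \ K).card + (n - 1) ≤ G.degree k := by
  have hsub : K.erase k ⊆ G.neighborFinset k ∩ K := fun x hx =>
    Finset.mem_inter.mpr ⟨(G.mem_neighborFinset k x).mpr
      (hK.isClique hk (Finset.mem_of_mem_erase hx) (Finset.ne_of_mem_erase hx).symm),
      Finset.mem_of_mem_erase hx⟩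
  have hcard := Finset.card_le_card hsub
  rw [Finset.card_erase_of_mem hk, hK.card_eq] at hcard
  have hsplit := Finset.card_sdiff_add_card_inter (G.neighborFinset k) K
  rw [card_neighborFinset_eq_degree] at hsplit
  omega

lemma eq_of_adj_of_notMem (hK : G.IsNClique n K) (hdeg : G.degree k ≤ n) (hk : k ∈ K)
    {x y : V} (hx : x ∉ K) (hy : y ∉ K) (hkx : G.Adj k x) (hky : G.Adj k y) : x = y := by
  have hle : (G.neighborFinset k \ K).card ≤ 1 := by
    have := hK.card_neighborFinset_sdiff_add_le_degree hk
    have : 1 ≤ n := hK.card_eq ▸ Finset.card_pos.mpr ⟨k, hk⟩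
    omega
  exact Finset.card_le_one.mp hle x (by simp [hkx, hx]) y (by simp [hky, hy])

end SimpleGraph.IsNClique

theorem stmt_1_general {V : Type*} [Fintype V] [DecidableEq V] (G : SimpleGraph V)
    [DecidableRel G.Adj] (Δ : ℕ)
    (hdeg : ∀ v : V, G.degree v ≤ Δ)
    (K : Finset V) (hK : G.IsNClique Δ K)
    (u' v' : V) (hu' : u' ∉ K) (hv' : v' ∉ K) (huv : G.Adj u' v')
    (hu'K : ∃ w ∈ K, G.Adj u' w) (hv'K : ∃ w ∈ K, G.Adj v' w) :
    _root_.indepNum (G.induce ((↑K : Set V)ᶜ)) + 1 ≤ _root_.indepNum G := by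
  obtain ⟨S, hS, hScard⟩ := exists_isIndepFinset_card_eq_indepNum (G.induce ((↑K : Set V)ᶜ))
  set T := S.map (Embedding.induce ((↑K : Set V)ᶜ)).toEmbedding
  have hT : IsIndepFinset G T := hS.map_embedding _
  have hTK : ∀ t ∈ T, t ∉ K := by
    simp only [T, Finset.mem_map]
    rintro _ ⟨⟨t, ht⟩, -, rfl⟩
    exact ht
  by_cases hfree : ∃ k ∈ K, ∀ t ∈ T, ¬ G.Adj k t
  · obtain ⟨k, hk, hkT⟩ := hfree
    calc _root_.indepNum (G.induce ((↑K : Set V)ᶜ)) + 1 = (insert k T).card := by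
          rw [Finset.card_insert_of_notMem fun h => hTK k h hk, Finset.card_map, hScard]
      _ ≤ _root_.indepNum G := (hT.insert hkT).card_le_indepNum
  · push Not at hfree
    have mem_T : ∀ x ∉ K, (∃ w ∈ K, G.Adj x w) → x ∈ T := by
      rintro x hx ⟨w, hw, hxw⟩
      obtain ⟨t, ht, hwt⟩ := hfree w hw
      rwa [hK.eq_of_adj_of_notMem (hdeg w) hw hx (hTK t ht) hxw.symm hwt]
    exact absurd huv (hT u' (mem_T u' hu' hu'K) v' (mem_T v' hv' hv'K) huv.ne)

theorem stmt_1 {V : Type*} [Fintype V] [DecidableEq V] (G : SimpleGraph V)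
    [DecidableRel G.Adj] (Δ : ℕ) (hΔ : 1 ≤ Δ)
    (hdeg : ∀ v : V, G.degree v ≤ Δ)
    (K : Finset V) (hK : G.IsNClique Δ K)
    (u' v' : V) (hu' : u' ∉ K) (hv' : v' ∉ K) (huv : G.Adj u' v')
    (hu'K : ∃ w ∈ K, G.Adj u' w) (hv'K : ∃ w ∈ K, G.Adj v' w) :
    _root_.indepNum (G.induce ((↑K : Set V)ᶜ)) + 1 ≤ _root_.indepNum G :=
  stmt_1_general G Δ hdeg K hK u' v' hu' hv' huv hu'K hv'K
end

section
/- Let G be a graph with maximum degree at most Δ, and let v₁, v₂, v₃ be three vertices such that |N[vᵢ] ∩ N[vⱼ]| ≥ Δ−2 for all 1 ≤ i < j ≤ 3. Then |N[v₁] ∪ N[v₂] ∪ N[v₃]| ≤ Δ + 7. -/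
open SimpleGraph

theorem stmt_4 {V : Type*} [Fintype V] [DecidableEq V] (G : SimpleGraph V)
    [DecidableRel G.Adj] (Δ : ℕ) (hΔ : 4 ≤ Δ)
    (hdeg : ∀ v : V, G.degree v ≤ Δ)
    (v₁ v₂ v₃ : V)
    (h12 : Δ - 2 ≤ (closedNbhd G v₁ ∩ closedNbhd G v₂).card)
    (h13 : Δ - 2 ≤ (closedNbhd G v₁ ∩ closedNbhd G v₃).card)
    (h23 : Δ - 2 ≤ (closedNbhd G v₂ ∩ closedNbhd G v₃).card) :
    (closedNbhd G v₁ ∪ closedNbhd G v₂ ∪ closedNbhd G v₃).card ≤ Δ + 7 := by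
  set A := closedNbhd G v₁
  set B := closedNbhd G v₂
  set C := closedNbhd G v₃
  have hcard : ∀ v : V, (closedNbhd G v).card ≤ Δ + 1 := by
    intro v
    calc (closedNbhd G v).card ≤ (G.neighborFinset v).card + 1 :=
          Finset.card_insert_le _ _
      _ = G.degree v + 1 := by rw [G.card_neighborFinset_eq_degree]
      _ ≤ Δ + 1 := by have := hdeg v; omega
  have h1 : (A ∪ B ∪ C).card + ((A ∪ B) ∩ C).card = (A ∪ B).card + C.card :=
    Finset.card_union_add_card_inter _ _
  have h2 : (A ∪ B).card + (A ∩ B).card = A.card + B.card :=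
    Finset.card_union_add_card_inter _ _
  have h3 : (A ∩ C).card ≤ ((A ∪ B) ∩ C).card :=
    Finset.card_le_card (Finset.inter_subset_inter_right Finset.subset_union_left)
  have hA : A.card ≤ Δ + 1 := hcard v₁
  have hB : B.card ≤ Δ + 1 := hcard v₂
  have hC : C.card ≤ Δ + 1 := hcard v₃
  omega
end

section
/- Let G be a graph of maximum degree at most 3 containing a diamond H (an induced K₄ minus an edge), and let G' be obtained from G by contracting all four vertices of H to a single vertex v (deleting loops and multiple edges). Then v has degree at most 2 in G', and α(G) ≥ α(G') + 1. -/
open SimpleGraph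

/-- The graph obtained from `G` by contracting the vertex set `s` to a single
new vertex (represented by `none`), deleting loops and multiple edges. -/
def contractSet {V : Type*} (G : SimpleGraph V) (s : Set V) :
    SimpleGraph (Option ↥(sᶜ)) where
  Adj x y :=
    match x, y with
    | some a, some b => G.Adj a.1 b.1
    | some a, none => ∃ w ∈ s, G.Adj w a.1
    | none, some b => ∃ w ∈ s, G.Adj w b.1
    | none, none => False
  symm := by
    constructor
    rintro (_ | a) (_ | b) h
    · exact h
    · exact h
    · exact h
    · exact G.adj_symm h
  loopless := by
    constructor
    rintro (_ | a) h
    · exact h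
    · exact G.irrefl h

/-!
In a diamond on `{a, b, c, d}` with `a`, `b` the non-adjacent pair, in a graph of maximum
degree 3, the vertices `c` and `d` already have their three neighbours inside the diamond, and
`a`, `b` have at most one neighbour outside it each; hence the contracted vertex has degree at most 2.
A maximum independent set of the contraction lifts to an independent set of `G` that is one
larger: if it contains the contracted vertex, replace that vertex by `a` and `b` (every outside
neighbour of `a` or `b` is a neighbour of the contracted vertex); otherwise add `c`.
-/

open Finset

section IndepNum

variable {W : Type*} [Finite W]

lemma bddAbove_indepCards (H : SimpleGraph W) :
    BddAbove {n | ∃ t : Finset W, IsIndepFinset H t ∧ t.card = n} := by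
  have := Fintype.ofFinite W
  refine ⟨Fintype.card W, ?_⟩
  rintro n ⟨t, -, rfl⟩
  exact t.card_le_univ

lemma IsIndepFinset.card_le_indepNum_s13 {H : SimpleGraph W} {t : Finset W}
    (ht : IsIndepFinset H t) : t.card ≤ _root_.indepNum H :=
  le_csSup (bddAbove_indepCards H) ⟨t, ht, rfl⟩

lemma exists_isIndepFinset_card_eq_indepNum_s13 (H : SimpleGraph W) :
    ∃ t, IsIndepFinset H t ∧ t.card = _root_.indepNum H :=
  Nat.sSup_mem (s := {n | ∃ t : Finset W, IsIndepFinset H t ∧ t.card = n})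
    ⟨0, ∅, by simp [IsIndepFinset], rfl⟩ (bddAbove_indepCards H)

end IndepNum

section Contraction

variable {V : Type*} {G : SimpleGraph V} {s : Finset V}

def contractLift (T : Finset (Option ↥(↑s : Set V)ᶜ)) : Finset V :=
  T.eraseNone.map (Function.Embedding.subtype _)

lemma mem_contractLift {T : Finset (Option ↥(↑s : Set V)ᶜ)} {x : V} :
    x ∈ contractLift T ↔ ∃ hx : x ∉ s, some ⟨x, hx⟩ ∈ T := by
  simp [contractLift]

lemma card_contractLift (T : Finset (Option ↥(↑s : Set V)ᶜ)) :
    (contractLift T).card = T.eraseNone.card :=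
  card_map _

lemma disjoint_contractLift (T : Finset (Option ↥(↑s : Set V)ᶜ)) :
    Disjoint s (contractLift T) :=
  disjoint_left.mpr fun _ hxs hxT => (mem_contractLift.mp hxT).1 hxs

variable [DecidableEq V]

lemma IsIndepFinset.union_contractLift {T : Finset (Option ↥(↑s : Set V)ᶜ)} {I : Finset V}
    (hT : IsIndepFinset (contractSet G ↑s) T) (hI : IsIndepFinset G I) (hIs : I ⊆ s)
    (hsep : none ∈ T ∨ ∀ w ∈ I, G.neighborSet w ⊆ ↑s) :
    IsIndepFinset G (I ∪ contractLift T) := by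
  have cross : ∀ u ∈ I, ∀ v ∈ contractLift T, ¬ G.Adj u v := by
    intro u hu v hv huv
    obtain ⟨hvs, hvT⟩ := mem_contractLift.mp hv
    rcases hsep with hnone | hnbr
    · exact hT none hnone _ hvT (Option.some_ne_none _).symm ⟨u, hIs hu, huv⟩
    · exact hvs (hnbr u hu huv)
  intro u hu v hv huv hadj
  rcases mem_union.mp hu with hu | hu <;> rcases mem_union.mp hv with hv | hv
  · exact hI u hu v hv huv hadj
  · exact cross u hu v hv hadj
  · exact cross v hv u hu hadj.symm
  · obtain ⟨_, huT⟩ := mem_contractLift.mp hu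
    obtain ⟨_, hvT⟩ := mem_contractLift.mp hv
    exact hT _ huT _ hvT (by simpa using huv) hadj

lemma indepNum_contractSet_add_le [Finite V] {k : ℕ} {I₀ I₁ : Finset V}
    (hI₀ : IsIndepFinset G I₀) (hI₀s : I₀ ⊆ s) (hI₀card : I₀.card = k)
    (hI₀nbr : ∀ w ∈ I₀, G.neighborSet w ⊆ ↑s)
    (hI₁ : IsIndepFinset G I₁) (hI₁s : I₁ ⊆ s) (hI₁card : I₁.card = k + 1) :
    _root_.indepNum (contractSet G ↑s) + k ≤ _root_.indepNum G := by
  obtain ⟨T, hT, hTcard⟩ := exists_isIndepFinset_card_eq_indepNum_s13 (contractSet G ↑s)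
  by_cases hnone : none ∈ T
  · have hU := (hT.union_contractLift hI₁ hI₁s (Or.inl hnone)).card_le_indepNum_s13
    rw [card_union_of_disjoint ((disjoint_contractLift T).mono_left hI₁s),
      card_contractLift, card_eraseNone_of_mem hnone] at hU
    have : 0 < T.card := card_pos.mpr ⟨none, hnone⟩
    omega
  · have hU := (hT.union_contractLift hI₀ hI₀s (Or.inr hI₀nbr)).card_le_indepNum_s13
    rw [card_union_of_disjoint ((disjoint_contractLift T).mono_left hI₀s),
      card_contractLift, card_eraseNone_of_not_mem hnone] at hU
    omega

variable [Fintype V] [DecidableRel G.Adj]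

lemma ncard_neighborSet_none_le :
    ((contractSet G ↑s).neighborSet none).ncard ≤ ∑ w ∈ s, (G.neighborFinset w \ s).card := by
  let S : Finset V := s.biUnion fun w => G.neighborFinset w \ s
  have hmaps : Set.MapsTo (Option.map Subtype.val) ((contractSet G ↑s).neighborSet none)
      (some '' ↑S) := by
    rintro (_ | ⟨x, hx⟩) h
    · exact absurd h (contractSet G ↑s).notMem_neighborSet_self
    · obtain ⟨w, hw, hwx⟩ := h
      exact ⟨x, mem_biUnion.mpr ⟨w, hw, mem_sdiff.mpr ⟨(mem_neighborFinset ..).mpr hwx, hx⟩⟩, rfl⟩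
  calc ((contractSet G ↑s).neighborSet none).ncard
      ≤ (some '' (↑S : Set V)).ncard :=
        Set.ncard_le_ncard_of_injOn _ hmaps
          (Option.map_injective Subtype.val_injective).injOn (Set.toFinite _)
    _ = S.card := by
        rw [Set.ncard_image_of_injective _ (Option.some_injective V), Set.ncard_coe_finset]
    _ ≤ ∑ w ∈ s, (G.neighborFinset w \ s).card := card_biUnion_le

lemma card_neighborFinset_sdiff_add_card_le {w : V} {t : Finset V}
    (hts : t ⊆ s) (htw : t ⊆ G.neighborFinset w) :
    (G.neighborFinset w \ s).card + t.card ≤ G.degree w := by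
  rw [← card_neighborFinset_eq_degree,
    ← card_union_of_disjoint (disjoint_of_subset_right hts sdiff_disjoint)]
  exact card_le_card (union_subset sdiff_subset htw)

end Contraction

theorem stmt_13 {V : Type*} [Fintype V] [DecidableEq V] (G : SimpleGraph V)
    [DecidableRel G.Adj]
    (hdeg : ∀ v : V, G.degree v ≤ 3)
    (s : Finset V) (a b c d : V)
    (hab : a ≠ b) (hac : a ≠ c) (had : a ≠ d) (hbc : b ≠ c) (hbd : b ≠ d) (hcd : c ≠ d)
    (hs : s = {a, b, c, d})
    (eac : G.Adj a c) (ead : G.Adj a d) (ebc : G.Adj b c) (ebd : G.Adj b d)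
    (ecd : G.Adj c d) (nab : ¬ G.Adj a b) :
    ((contractSet G (↑s : Set V)).neighborSet none).ncard ≤ 2 ∧
    _root_.indepNum (contractSet G (↑s : Set V)) + 1 ≤ _root_.indepNum G := by
  subst hs
  have out_le : ∀ w {t : Finset V}, t ⊆ {a, b, c, d} → t ⊆ G.neighborFinset w →
      (G.neighborFinset w \ {a, b, c, d}).card + t.card ≤ 3 :=
    fun w _ hts htw => (card_neighborFinset_sdiff_add_card_le hts htw).trans (hdeg w)
  have ha := out_le a (t := {c, d}) (by simp [subset_iff]) (by simp [subset_iff, eac, ead])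
  have hb := out_le b (t := {c, d}) (by simp [subset_iff]) (by simp [subset_iff, ebc, ebd])
  have hc := out_le c (t := {a, b, d}) (by simp [subset_iff])
    (by simp [subset_iff, eac.symm, ebc.symm, ecd])
  have hd := out_le d (t := {a, b, c}) (by simp [subset_iff])
    (by simp [subset_iff, ead.symm, ebd.symm, ecd.symm])
  rw [card_pair hcd] at ha hb
  rw [card_insert_of_notMem (by simp [hab, had]), card_pair hbd] at hc
  rw [card_insert_of_notMem (by simp [hab, hac]), card_pair hbc] at hd
  constructor
  · calc _ ≤ _ := ncard_neighborSet_none_le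
      _ ≤ 2 := by
        rw [sum_insert (by simp [hab, hac, had]), sum_insert (by simp [hbc, hbd]),
          sum_pair hcd]
        omega
  · have hc_nbr : G.neighborSet c ⊆ ↑({a, b, c, d} : Finset V) := by
      rw [← coe_neighborFinset, coe_subset, ← sdiff_eq_empty_iff_subset, ← card_eq_zero]
      omega
    refine indepNum_contractSet_add_le (I₀ := {c}) (I₁ := {a, b}) (by simp [IsIndepFinset])
      (by simp) (card_singleton c) (by simpa using hc_nbr) ?_ (by simp [subset_iff])
      (card_pair hab)
    simp [IsIndepFinset, nab, G.adj_comm b a]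
end
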